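/- arXiv:1004.2422 — 2 statements merged into one kernel-verified Lean document; each statement's English description precedes it below -/
import Mathlib

section
/- Let G be an amenable group with Følner net F = (F_j)_{j∈J}, and let A and B be finite sets. If X ⊆ A^G and Y ⊆ B^G are subshifts such that there exists a bijective cellular automaton τ : X → Y, then ent_F(X) = ent_F(Y). -/
open Pointwise Filter

variable {G : Type*} [Group G]

/-- The shift action of `G` on configurations: `(g • x)(h) = x(g⁻¹h)`. -/
def shift {A : Type*} (g : G) (x : G → A) : G → A := fun h => x (g⁻¹ * h)

/-- A subshift: a closed, shift-invariant subset of `A^G` (prodiscrete topology). -/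
def IsSubshift {A : Type*} [TopologicalSpace A] (X : Set (G → A)) : Prop :=
  IsClosed X ∧ ∀ g : G, ∀ x ∈ X, shift g x ∈ X

/-- The `Δ`-neighborhood `Ω^{+Δ} = ΩΔ⁻¹ = {g : gΔ ∩ Ω ≠ ∅}`. -/
def plusNbhd (Ω Δ : Set G) : Set G := {g : G | ∃ d ∈ Δ, g * d ∈ Ω}

/-- `Δ`-irreducibility of a subshift. -/
def DeltaIrreducible {A : Type*} (Δ : Finset G) (X : Set (G → A)) : Prop :=
  ∀ Ω₁ Ω₂ : Finset G,
    plusNbhd (Ω₁ : Set G) (Δ : Set G) ∩ (Ω₂ : Set G) = ∅ →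
    ∀ x₁ ∈ X, ∀ x₂ ∈ X,
      ∃ x ∈ X, (∀ g ∈ Ω₁, x g = x₁ g) ∧ (∀ g ∈ Ω₂, x g = x₂ g)

/-- Strong irreducibility: `Δ`-irreducible for some finite `Δ ⊆ G`. -/
def StronglyIrreducible {A : Type*} (X : Set (G → A)) : Prop :=
  ∃ Δ : Finset G, DeltaIrreducible Δ X

/-- A cellular automaton between subshifts `X ⊆ A^G` and `Y ⊆ B^G`:
a map that sends `X` into `Y`, is continuous on `X`, and is `G`-equivariant on `X`. -/
def IsCellularAutomaton {A B : Type*} [TopologicalSpace A] [TopologicalSpace B]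
    (X : Set (G → A)) (Y : Set (G → B)) (τ : (G → A) → (G → B)) : Prop :=
  Set.MapsTo τ X Y ∧ ContinuousOn τ X ∧ ∀ g : G, ∀ x ∈ X, τ (shift g x) = shift g (τ x)

/-- Pre-injectivity of a map on a subshift `X`. -/
def PreInjective {A B : Type*} (X : Set (G → A)) (τ : (G → A) → (G → B)) : Prop :=
  ∀ x₁ ∈ X, ∀ x₂ ∈ X, {g : G | x₁ g ≠ x₂ g}.Finite → τ x₁ = τ x₂ → x₁ = x₂

/-- A Følner net for `G`, indexed by a directed preorder `J`. -/
def IsFolnerNet {J : Type*} [Preorder J] (F : J → Finset G) : Prop :=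
  (∀ j, (F j).Nonempty) ∧
  ∀ E : Finset G,
    Tendsto (fun j => ((plusNbhd (F j : Set G) (E : Set G) \ (F j : Set G)).ncard : ℝ) /
        ((F j).card : ℝ)) atTop (nhds 0)

/-- The entropy of a subset `X ⊆ A^G` with respect to a Følner net `F`. -/
noncomputable def entropy {J A : Type*} [Preorder J] (F : J → Finset G) (X : Set (G → A)) : ℝ :=
  limsup (fun j => Real.log (((Set.restrict (F j : Set G)) '' X).ncard : ℝ) / ((F j).card : ℝ))
    atTop

/-- Topological mixing for a subshift (open subsets of `X` are traces of ambient opens). -/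
def TopologicallyMixing {A : Type*} [TopologicalSpace A] (X : Set (G → A)) : Prop :=
  ∀ U V : Set (G → A), IsOpen U → IsOpen V → (U ∩ X).Nonempty → (V ∩ X).Nonempty →
    ∃ F : Finset G, ∀ g : G, g ∉ F → ((U ∩ X) ∩ (shift g '' (V ∩ X))).Nonempty

/-- An `(E,E')`-tiling. -/
def IsTiling (E E' T : Set G) : Prop :=
  T.PairwiseDisjoint (fun g => g • E) ∧ (⋃ g ∈ T, g • E') = Set.univ

/-!
A cellular automaton `τ` on a subshift `X` over a finite alphabet has a finite memory set
`S ∋ 1` (by compactness of `X`), so the patterns of `τ '' X` on `Ω` are determined by those of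
`X` on `ΩS`; hence `|(τ X)_Ω| ≤ |X_Ω| · |A| ^ |ΩS \ Ω|`. Along a Følner net
`|ΩS \ Ω| / |Ω| → 0`, which gives `ent(τ X) ≤ ent(X)`. A bijective cellular automaton between
subshifts has a continuous inverse (compact to Hausdorff), which is again a cellular automaton,
so the inequality also holds in the other direction.
-/

open Set

section Counting

variable {ι α β γ A : Type*}

theorem Set.ncard_image_le_ncard_image_of_factor {s : Set α} {f : α → β} {g : α → γ}
    (hg : (g '' s).Finite) (h : ∀ a ∈ s, ∀ b ∈ s, g a = g b → f a = f b) :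
    (f '' s).ncard ≤ (g '' s).ncard := by
  rcases isEmpty_or_nonempty α with hα | hα
  · simp [eq_empty_of_isEmpty s]
  refine ncard_le_ncard_of_injOn (fun b => g (Function.invFunOn f s b)) ?_ ?_ hg
  · rintro _ ⟨a, ha, rfl⟩
    exact mem_image_of_mem g (Function.invFunOn_mem ⟨a, ha, rfl⟩)
  · rintro _ ⟨a, ha, rfl⟩ _ ⟨b, hb, rfl⟩ hab
    rw [← Function.invFunOn_eq (f := f) ⟨a, ha, rfl⟩,
      ← Function.invFunOn_eq (f := f) ⟨b, hb, rfl⟩]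
    exact h _ (Function.invFunOn_mem ⟨a, ha, rfl⟩) _ (Function.invFunOn_mem ⟨b, hb, rfl⟩) hab

theorem ncard_domRestrict_image_le_mul [Finite A] (X : Set (ι → A)) {s t : Set ι} (hst : s ⊆ t)
    (ht : t.Finite) :
    (t.domRestrict '' X).ncard ≤ (s.domRestrict '' X).ncard * Nat.card A ^ (t \ s).ncard := by
  have : Finite s := (ht.subset hst).to_subtype
  have : Finite ↥(t \ s) := (ht.sdiff).to_subtype
  calc (t.domRestrict '' X).ncard
      ≤ ((fun x => (s.domRestrict x, (t \ s).domRestrict x)) '' X).ncard := by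
        refine ncard_image_le_ncard_image_of_factor (toFinite _) fun x _ y _ hxy => ?_
        simp only [Prod.mk.injEq] at hxy
        funext ⟨i, hi⟩
        by_cases his : i ∈ s
        · exact congrFun hxy.1 ⟨i, his⟩
        · exact congrFun hxy.2 ⟨i, hi, his⟩
    _ ≤ ((s.domRestrict '' X) ×ˢ (univ : Set (↥(t \ s) → A))).ncard := by
        refine ncard_le_ncard ?_ (toFinite _)
        rintro _ ⟨x, hx, rfl⟩
        exact ⟨mem_image_of_mem _ hx, mem_univ _⟩
    _ = (s.domRestrict '' X).ncard * Nat.card A ^ (t \ s).ncard := by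
        rw [ncard_prod, ncard_univ, Nat.card_fun, Nat.card_coe_set_eq]

theorem ncard_domRestrict_image_le_pow [Finite A] (X : Set (ι → A)) (s : Finset ι) :
    ((s : Set ι).domRestrict '' X).ncard ≤ Nat.card A ^ s.card := by
  calc _ ≤ Nat.card (↥(s : Set ι) → A) := ncard_le_card _
    _ = Nat.card A ^ s.card := by rw [Nat.card_fun, Nat.card_coe_set_eq, ncard_coe_finset]

end Counting

theorem Real.log_le_log_add_mul_log_of_le_mul {m n a k : ℕ} (h : m ≤ n * a ^ k) :
    Real.log m ≤ Real.log n + k * Real.log a := by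
  rcases Nat.eq_zero_or_pos m with rfl | hm
  · rw [Nat.cast_zero, Real.log_zero]
    exact add_nonneg (Real.log_natCast_nonneg n)
      (mul_nonneg k.cast_nonneg (Real.log_natCast_nonneg a))
  obtain ⟨hn, hak⟩ := CanonicallyOrderedAdd.mul_pos.1 (hm.trans_le h)
  calc Real.log m ≤ Real.log (n * a ^ k : ℕ) :=
        Real.log_le_log (by positivity) (by exact_mod_cast h)
    _ = Real.log n + k * Real.log a := by
        push_cast
        rw [Real.log_mul (by positivity) (by exact_mod_cast hak.ne'), Real.log_pow]

theorem Filter.limsup_le_limsup_of_le_add_of_tendsto_zero {ι : Type*} {f : Filter ι} [f.NeBot]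
    {u v c : ι → ℝ} (hu : IsBoundedUnder (· ≥ ·) f u) (hv₀ : IsBoundedUnder (· ≥ ·) f v)
    (hv₁ : IsBoundedUnder (· ≤ ·) f v) (hc : Tendsto c f (nhds 0))
    (h : ∀ᶠ i in f, u i ≤ v i + c i) :
    limsup u f ≤ limsup v f :=
  calc limsup u f ≤ limsup (v + c) f :=
        limsup_le_limsup h hu.isCoboundedUnder_le (isBoundedUnder_le_add hv₁ hc.isBoundedUnder_le)
    _ ≤ limsup v f + limsup c f :=
        limsup_add_le hv₀ hv₁ hc.isCoboundedUnder_le hc.isBoundedUnder_le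
    _ = limsup v f := by rw [hc.limsup_eq, add_zero]

theorem Set.InvOn.continuousOn_of_isCompact {α β : Type*} [TopologicalSpace α]
    [TopologicalSpace β] [T2Space β] {f : α → β} {g : β → α} {s : Set α} {t : Set β}
    (hinv : InvOn g f s t) (hg : MapsTo g t s) (hs : IsCompact s) (hf : ContinuousOn f s) :
    ContinuousOn g t := by
  refine continuousOn_iff_isClosed.2 fun u hu => ⟨f '' (u ∩ s), ?_, ?_⟩
  · exact ((hs.inter_left hu).image_of_continuousOn (hf.mono inter_subset_right)).isClosed
  · ext y
    constructor
    · rintro ⟨hyu, hyt⟩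
      exact ⟨⟨g y, ⟨hyu, hg hyt⟩, hinv.2 hyt⟩, hyt⟩
    · rintro ⟨⟨x, ⟨hxu, hxs⟩, rfl⟩, hyt⟩
      exact ⟨show g (f x) ∈ u from (hinv.1 hxs).symm ▸ hxu, hyt⟩

theorem IsCompact.exists_finset_eq_of_continuousOn {ι A B : Type*} [TopologicalSpace A]
    [DiscreteTopology A] [TopologicalSpace B] [DiscreteTopology B] {X : Set (ι → A)}
    (hX : IsCompact X) {φ : (ι → A) → B} (hφ : ContinuousOn φ X) :
    ∃ S : Finset ι, ∀ x₁ ∈ X, ∀ x₂ ∈ X, (∀ i ∈ S, x₁ i = x₂ i) → φ x₁ = φ x₂ := by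
  classical
  let K := X ×ˢ X ∩ Prod.map φ φ ⁻¹' {q | q.1 ≠ q.2}
  have hK : IsCompact K := (hX.prod hX).of_isClosed_subset
    ((hφ.prodMap hφ).preimage_isClosed_of_isClosed (hX.isClosed.prod hX.isClosed)
      (isClosed_discrete _)) inter_subset_left
  let agree (S : Finset ι) : Set ((ι → A) × (ι → A)) := {p | ∀ i ∈ S, p.1 i = p.2 i}
  have hagree (S : Finset ι) : IsClosed (agree S) := by
    simp only [agree, ofPred_forall]
    exact isClosed_biInter fun i _ => isClosed_eq
      ((continuous_apply i).comp continuous_fst) ((continuous_apply i).comp continuous_snd)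
  have hempty : K ∩ ⋂ S, agree S = ∅ := by
    refine eq_empty_of_forall_notMem fun p ⟨⟨_, hne⟩, hp⟩ => hne ?_
    have : p.1 = p.2 := funext fun i => mem_iInter.1 hp {i} i (Finset.mem_singleton_self i)
    simp [this]
  have hdir : Directed (· ⊇ ·) agree := fun S₁ S₂ => ⟨S₁ ∪ S₂,
    fun p hp i hi => hp i (Finset.mem_union_left _ hi),
    fun p hp i hi => hp i (Finset.mem_union_right _ hi)⟩
  obtain ⟨S, hS⟩ := hK.elim_directed_family_closed agree hagree hempty hdir
  refine ⟨S, fun x₁ hx₁ x₂ hx₂ h => not_not.1 fun hne => ?_⟩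
  exact (eq_empty_iff_forall_notMem.1 hS) (x₁, x₂) ⟨⟨⟨hx₁, hx₂⟩, hne⟩, h⟩

theorem plusNbhd_eq_mul_inv (Ω Δ : Set G) : plusNbhd Ω Δ = Ω * Δ⁻¹ := by
  ext g
  simp only [plusNbhd, mem_ofPred_eq, Set.mem_mul, Set.mem_inv]
  constructor
  · rintro ⟨d, hd, hgd⟩
    exact ⟨g * d, hgd, d⁻¹, by rwa [inv_inv], by group⟩
  · rintro ⟨ω, hω, d, hd, rfl⟩
    exact ⟨d⁻¹, hd, by rwa [mul_inv_cancel_right]⟩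

def IsMemorySet {A B : Type*} (X : Set (G → A)) (τ : (G → A) → (G → B)) (S : Finset G) : Prop :=
  ∀ x₁ ∈ X, ∀ x₂ ∈ X, ∀ g : G, (∀ s ∈ S, x₁ (g * s) = x₂ (g * s)) → τ x₁ g = τ x₂ g

section CellularAutomaton

variable {A B : Type*} [TopologicalSpace A] [TopologicalSpace B] [DiscreteTopology B]
  {X : Set (G → A)} {Y : Set (G → B)} {τ : (G → A) → (G → B)}

theorem IsCellularAutomaton.exists_memorySet [Finite A] [DiscreteTopology A] (hX : IsSubshift X)
    (hτ : IsCellularAutomaton X Y τ) : ∃ S : Finset G, 1 ∈ S ∧ IsMemorySet X τ S := by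
  classical
  obtain ⟨S, hS⟩ := hX.1.isCompact.exists_finset_eq_of_continuousOn
    ((continuous_apply 1).comp_continuousOn hτ.2.1)
  refine ⟨insert 1 S, Finset.mem_insert_self 1 S, fun x₁ hx₁ x₂ hx₂ g h => ?_⟩
  have hτg (x) (hx : x ∈ X) : τ x g = τ (shift g⁻¹ x) 1 := by
    simp [hτ.2.2 g⁻¹ x hx, shift]
  rw [hτg x₁ hx₁, hτg x₂ hx₂]
  exact hS _ (hX.2 _ _ hx₁) _ (hX.2 _ _ hx₂) fun s hs => by
    simpa [shift] using h s (Finset.mem_insert_of_mem hs)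

theorem IsCellularAutomaton.exists_inverse [Finite A] (hX : IsSubshift X) (hY : IsSubshift Y)
    (hτ : IsCellularAutomaton X Y τ) (hbij : BijOn τ X Y) (hne : X.Nonempty) :
    ∃ σ : (G → B) → (G → A), IsCellularAutomaton Y X σ ∧ σ '' Y = X := by
  have : Nonempty (G → A) := ⟨hne.some⟩
  have hinv := hbij.invOn_invFunOn
  have hσ : BijOn (Function.invFunOn τ X) Y X := hbij.symm hinv.symm
  refine ⟨Function.invFunOn τ X, ⟨hσ.mapsTo, ?_, fun g y hy => ?_⟩, hσ.image_eq⟩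
  · exact hinv.continuousOn_of_isCompact hσ.mapsTo hX.1.isCompact hτ.2.1
  · refine hbij.injOn (hσ.mapsTo (hY.2 g y hy)) (hX.2 g _ (hσ.mapsTo hy)) ?_
    rw [hinv.2 (hY.2 g y hy), hτ.2.2 g _ (hσ.mapsTo hy), hinv.2 hy]

end CellularAutomaton

section PatternDensity

variable {ι A : Type*} (X : Set (ι → A)) (Ω : Finset ι)

noncomputable def patternDensity : ℝ :=
  Real.log ((Ω : Set ι).domRestrict '' X).ncard / Ω.card

theorem patternDensity_nonneg : 0 ≤ patternDensity X Ω :=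
  div_nonneg (Real.log_natCast_nonneg _) (Nat.cast_nonneg _)

theorem patternDensity_le_log_card [Finite A] : patternDensity X Ω ≤ Real.log (Nat.card A) := by
  refine div_le_of_le_mul₀ (Nat.cast_nonneg _) (Real.log_natCast_nonneg _) ?_
  have h := Real.log_le_log_add_mul_log_of_le_mul
    ((ncard_domRestrict_image_le_pow X Ω).trans_eq (one_mul _).symm)
  rwa [Nat.cast_one, Real.log_one, zero_add, mul_comm] at h

end PatternDensity

theorem IsMemorySet.patternDensity_image_le {A B : Type*} [Finite A] {X : Set (G → A)}
    {τ : (G → A) → (G → B)} {S : Finset G} (hS : IsMemorySet X τ S) (hS1 : 1 ∈ S)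
    (Ω : Finset G) :
    patternDensity (τ '' X) Ω ≤ patternDensity X Ω +
      ((Ω * S : Set G) \ Ω).ncard / Ω.card * Real.log (Nat.card A) := by
  have hΩS : (Ω : Set G) ⊆ Ω * S := fun g hg => ⟨g, hg, 1, hS1, mul_one g⟩
  have hfin : (Ω * S : Set G).Finite := Ω.finite_toSet.mul S.finite_toSet
  have := hfin.to_subtype
  have hcount : ((Ω : Set G).domRestrict '' (τ '' X)).ncard ≤
      ((Ω * S : Set G).domRestrict '' X).ncard := by
    rw [image_image]
    refine ncard_image_le_ncard_image_of_factor (toFinite _) fun x hx y hy hxy => ?_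
    funext ⟨g, hg⟩
    exact hS x hx y hy g fun s hs => congrFun hxy ⟨g * s, mul_mem_mul hg hs⟩
  have hlog := Real.log_le_log_add_mul_log_of_le_mul
    (hcount.trans (ncard_domRestrict_image_le_mul X hΩS hfin))
  unfold patternDensity
  rw [div_mul_eq_mul_div, ← add_div]
  exact div_le_div_of_nonneg_right hlog (Nat.cast_nonneg _)

theorem entropy_image_le {A B : Type*} [Finite A] [TopologicalSpace A] [DiscreteTopology A]
    [TopologicalSpace B] [DiscreteTopology B] {J : Type*} [Nonempty J] [Preorder J]
    [IsDirected J (· ≤ ·)] {F : J → Finset G} (hF : IsFolnerNet F) {X : Set (G → A)}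
    {Y : Set (G → B)} (hX : IsSubshift X) {τ : (G → A) → (G → B)}
    (hτ : IsCellularAutomaton X Y τ) : entropy F (τ '' X) ≤ entropy F X := by
  classical
  obtain ⟨S, hS1, hS⟩ := hτ.exists_memorySet hX
  have hboundary : Tendsto (fun j => ((F j * S : Set G) \ F j).ncard / (F j).card *
      Real.log (Nat.card A)) atTop (nhds 0) := by
    simpa [plusNbhd_eq_mul_inv] using (hF.2 S⁻¹).mul_const (Real.log (Nat.card A))
  show limsup (fun j => patternDensity (τ '' X) (F j)) atTop ≤
    limsup (fun j => patternDensity X (F j)) atTop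
  exact limsup_le_limsup_of_le_add_of_tendsto_zero
    (isBoundedUnder_of ⟨0, fun j => patternDensity_nonneg _ _⟩)
    (isBoundedUnder_of ⟨0, fun j => patternDensity_nonneg _ _⟩)
    (isBoundedUnder_of ⟨_, fun j => patternDensity_le_log_card _ _⟩) hboundary
    (Eventually.of_forall fun j => hS.patternDensity_image_le hS1 (F j))

/-- Conjugate subshifts (via a bijective cellular automaton) have the same entropy. -/
theorem entropy_eq_of_bijective_ca {A B : Type*} [Fintype A] [Fintype B]
    [TopologicalSpace A] [DiscreteTopology A] [TopologicalSpace B] [DiscreteTopology B]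
    {J : Type*} [Nonempty J] [Preorder J] [IsDirected J (· ≤ ·)]
    (F : J → Finset G) (hF : IsFolnerNet F)
    (X : Set (G → A)) (Y : Set (G → B)) (hX : IsSubshift X) (hY : IsSubshift Y)
    (τ : (G → A) → (G → B)) (hτ : IsCellularAutomaton X Y τ)
    (hinj : Set.InjOn τ X) (hsurj : τ '' X = Y) :
    entropy F X = entropy F Y := by
  rcases X.eq_empty_or_nonempty with rfl | hne
  · subst hsurj
    simp [entropy]
  obtain ⟨σ, hσ, hσY⟩ := hτ.exists_inverse hX hY ⟨hτ.1, hinj, hsurj.ge⟩ hne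
  apply le_antisymm
  · simpa only [hσY] using entropy_image_le hF hY hσ
  · simpa only [hsurj] using entropy_image_le hF hX hτ
end

section
/- Let G be a group, let A be a finite set, and let X ⊆ A^G be a subshift. Suppose there exist a finite set B, a strongly irreducible subshift Y ⊆ B^G, and a surjective cellular automaton τ : Y → X. Then X is strongly irreducible. -/
open Pointwise Filter

variable {G : Type*} [Group G]

/-!
A continuous map on a compact subset of a product of discrete spaces, with discrete values, only
depends on finitely many coordinates. Applied to `y ↦ τ y 1` and transported by equivariance,
this gives a finite memory set `M`: the value `τ y g` is determined by `y` on `gM`. Hence if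
`Y` is `Δ`-irreducible, patterns of `X` on `Ω₁` and `Ω₂` lift to patterns of `Y` on `Ω₁M` and
`Ω₂M`, which are `Δ`-apart as soon as `Ω₁`, `Ω₂` are `MΔM⁻¹`-apart; so `X` is
`MΔM⁻¹`-irreducible.
-/

theorem exists_finset_eq_of_continuousOn {ι B A : Type*} [TopologicalSpace B] [DiscreteTopology B]
    [TopologicalSpace A] [DiscreteTopology A] {Y : Set (ι → B)} (hY : IsCompact Y)
    {f : (ι → B) → A} (hf : ContinuousOn f Y) :
    ∃ M : Finset ι, ∀ y ∈ Y, ∀ y' ∈ Y, (∀ m ∈ M, y m = y' m) → f y = f y' := by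
  classical
  have hlocal : ∀ z ∈ Y, ∃ I : Finset ι, ∀ w ∈ Y, (∀ m ∈ I, w m = z m) → f w = f z := by
    intro z hz
    obtain ⟨U, hU, hUsub⟩ := mem_nhdsWithin_iff_exists_mem_nhds_inter.mp
      (hf z hz ((isOpen_discrete {f z}).mem_nhds rfl))
    rw [nhds_pi, Filter.mem_pi'] at hU
    obtain ⟨I, t, ht, hIt⟩ := hU
    refine ⟨I, fun w hw hwz => hUsub ⟨hIt fun m hm => ?_, hw⟩⟩
    rw [hwz m hm]
    exact mem_of_mem_nhds (ht m)
  choose! I hI using hlocal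
  obtain ⟨t, htY, hcover⟩ := hY.elim_nhds_subcover (fun z => (I z : Set ι).pi fun m => {z m})
    fun z _ => set_pi_mem_nhds (I z).finite_toSet fun m _ => mem_nhds_discrete.mpr rfl
  refine ⟨t.biUnion I, fun y hy y' hy' hyy' => ?_⟩
  obtain ⟨z, hzt, hyz⟩ := Set.mem_iUnion₂.mp (hcover hy)
  have hyz' : ∀ m ∈ I z, y m = z m := hyz
  have hy'z : ∀ m ∈ I z, y' m = z m := fun m hm =>
    (hyy' m (Finset.mem_biUnion.mpr ⟨z, hzt, hm⟩)).symm.trans (hyz' m hm)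
  rw [hI z (htY z hzt) y hy hyz', hI z (htY z hzt) y' hy' hy'z]

theorem IsCellularAutomaton.exists_memory_set {A B : Type*} [Finite B]
    [TopologicalSpace A] [DiscreteTopology A] [TopologicalSpace B] [DiscreteTopology B]
    {X : Set (G → A)} {Y : Set (G → B)} {τ : (G → B) → (G → A)} (hY : IsSubshift Y)
    (hτ : IsCellularAutomaton Y X τ) :
    ∃ M : Finset G, ∀ y ∈ Y, ∀ y' ∈ Y, ∀ g : G,
      (∀ m ∈ M, y (g * m) = y' (g * m)) → τ y g = τ y' g := by
  obtain ⟨M, hM⟩ := exists_finset_eq_of_continuousOn hY.1.isCompact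
    ((continuous_apply (1 : G)).comp_continuousOn hτ.2.1)
  refine ⟨M, fun y hy y' hy' g hyy' => ?_⟩
  have h := hM _ (hY.2 g⁻¹ y hy) _ (hY.2 g⁻¹ y' hy') fun m hm => by
    simpa only [shift, inv_inv] using hyy' m hm
  simpa only [Function.comp_apply, hτ.2.2 g⁻¹ y hy, hτ.2.2 g⁻¹ y' hy', shift, inv_inv,
    mul_one] using h

theorem plusNbhd_mul_inter_mul_eq_empty {Ω₁ Ω₂ M Δ : Set G}
    (h : plusNbhd Ω₁ (M * Δ * M⁻¹) ∩ Ω₂ = ∅) : plusNbhd (Ω₁ * M) Δ ∩ (Ω₂ * M) = ∅ := by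
  refine Set.eq_empty_of_forall_notMem ?_
  rintro _ ⟨⟨δ, hδ, ω₁, hω₁, m₁, hm₁, hg₁⟩, ω₂, hω₂, m₂, hm₂, rfl⟩
  have hmem : m₂ * δ * m₁⁻¹ ∈ M * Δ * M⁻¹ :=
    Set.mul_mem_mul (Set.mul_mem_mul hm₂ hδ) (Set.inv_mem_inv.mpr hm₁)
  have hω : ω₂ * (m₂ * δ * m₁⁻¹) = ω₁ := by
    rw [← mul_inv_eq_iff_eq_mul.mpr hg₁.symm]
    group
  exact h.subset ⟨⟨_, hmem, hω ▸ hω₁⟩, hω₂⟩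

theorem DeltaIrreducible.of_surjOn [DecidableEq G] {A B : Type*} {Δ M : Finset G}
    {X : Set (G → A)} {Y : Set (G → B)} {τ : (G → B) → (G → A)} (hΔ : DeltaIrreducible Δ Y)
    (hmaps : Set.MapsTo τ Y X) (hsurj : Set.SurjOn τ Y X)
    (hM : ∀ y ∈ Y, ∀ y' ∈ Y, ∀ g : G, (∀ m ∈ M, y (g * m) = y' (g * m)) → τ y g = τ y' g) :
    DeltaIrreducible (M * Δ * M⁻¹) X := by
  intro Ω₁ Ω₂ hΩ x₁ hx₁ x₂ hx₂
  obtain ⟨y₁, hy₁, rfl⟩ := hsurj hx₁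
  obtain ⟨y₂, hy₂, rfl⟩ := hsurj hx₂
  have hΩM : plusNbhd ((Ω₁ * M : Finset G) : Set G) (Δ : Set G) ∩ ((Ω₂ * M : Finset G) : Set G)
      = ∅ := by
    push_cast at hΩ ⊢
    exact plusNbhd_mul_inter_mul_eq_empty hΩ
  obtain ⟨y, hy, hyy₁, hyy₂⟩ := hΔ _ _ hΩM y₁ hy₁ y₂ hy₂
  exact ⟨τ y, hmaps hy,
    fun g hg => hM y hy y₁ hy₁ g fun m hm => hyy₁ _ (Finset.mul_mem_mul hg hm),
    fun g hg => hM y hy y₂ hy₂ g fun m hm => hyy₂ _ (Finset.mul_mem_mul hg hm)⟩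

theorem stronglyIrreducible_of_surjective_ca_general {A B : Type*} [Fintype B]
    [TopologicalSpace A] [DiscreteTopology A] [TopologicalSpace B] [DiscreteTopology B]
    (X : Set (G → A))
    (Y : Set (G → B)) (hY : IsSubshift Y) (hYSI : StronglyIrreducible Y)
    (τ : (G → B) → (G → A)) (hτ : IsCellularAutomaton Y X τ)
    (hsurj : Set.SurjOn τ Y X) :
    StronglyIrreducible X := by
  classical
  obtain ⟨Δ, hΔ⟩ := hYSI
  obtain ⟨M, hM⟩ := hτ.exists_memory_set hY
  exact ⟨M * Δ * M⁻¹, hΔ.of_surjOn hτ.1 hsurj hM⟩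

/-- The image of a strongly irreducible subshift under a surjective cellular
automaton is strongly irreducible. -/
theorem stronglyIrreducible_of_surjective_ca {A B : Type*} [Fintype A] [Fintype B]
    [TopologicalSpace A] [DiscreteTopology A] [TopologicalSpace B] [DiscreteTopology B]
    (X : Set (G → A)) (hX : IsSubshift X)
    (Y : Set (G → B)) (hY : IsSubshift Y) (hYSI : StronglyIrreducible Y)
    (τ : (G → B) → (G → A)) (hτ : IsCellularAutomaton Y X τ)
    (hsurj : Set.SurjOn τ Y X) :
    StronglyIrreducible X :=
  stronglyIrreducible_of_surjective_ca_general X Y hY hYSI τ hτ hsurj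
end
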